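/- Let A ∈ ℝ^{n×n}, g ∈ ℝ^{n×l}, H ∈ ℝ^{l×n}, W¹ ∈ ℝ^{m×n}, W_min ∈ ℝ^{n×m}, b¹ ∈ ℝᵐ, c ∈ ℝⁿ, and let φ : ℝ → ℝ be incrementally sector bounded by [α, β] on ℝ with componentwise application Φ : ℝᵐ → ℝᵐ. Suppose there exist a symmetric positive definite P ∈ ℝ^{n×n} and constants 0 < p̲ ≤ p̄, γ > 0 with p̲·I ⪯ P ⪯ p̄·I such that [[(A + gH)ᵀP + P(A + gH) + γP − 2αβ·W¹ᵀW¹, P·W_min + (α+β)·W¹ᵀ], [(P·W_min + (α+β)·W¹ᵀ)ᵀ, −2·I_m]] ⪯ 0. Then any two differentiable functions x₁, x₂ : [0,∞) → ℝⁿ satisfying ẋ(t) = (A + gH)·x(t) + W_min·Φ(W¹·x(t) + b¹) + c for all t ≥ 0 satisfy ‖x₁(t) − x₂(t)‖ ≤ √(p̄/p̲)·e^{−(γ/2)·t}·‖x₁(0) − x₂(0)‖ for all t ≥ 0. -/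

import Mathlib

/-!
The difference `e = x₁ - x₂` of two trajectories obeys `ė = (A + gH) e + W_min Δ`, where
`Δ = Φ(W¹x₁ + b¹) - Φ(W¹x₂ + b¹)` satisfies, summing the sector inequality over the components,
`(Δ - α W¹e) ⬝ (Δ - β W¹e) ≤ 0`. Evaluating the matrix inequality at the stacked
vector `(e, Δ)` shows that `V = eᵀPe` satisfies `V̇ + γV ≤ 2 (Δ - α W¹e) ⬝ (Δ - β W¹e) ≤ 0`,
so `V(t) ≤ e^{-γt} V(0)` by Grönwall, and the bounds `p̲ I ⪯ P ⪯ p̄ I` turn this into the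
estimate on `‖e‖`.
-/

open Matrix

/-- The Euclidean norm of a vector in `ℝⁿ`. -/
noncomputable def eNorm {n : ℕ} (v : Fin n → ℝ) : ℝ := Real.sqrt (v ⬝ᵥ v)

section
variable {ι κ : Type*} [Fintype ι] [Fintype κ]

theorem HasDerivAt.dotProduct {f g : ℝ → ι → ℝ} {f' g' : ι → ℝ} {t : ℝ}
    (hf : HasDerivAt f f' t) (hg : HasDerivAt g g' t) :
    HasDerivAt (fun s => f s ⬝ᵥ g s) (f' ⬝ᵥ g t + f t ⬝ᵥ g') t := by
  simpa only [_root_.dotProduct, ← Finset.sum_add_distrib] using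
    HasDerivAt.fun_sum fun i _ => (hasDerivAt_pi.mp hf i).fun_mul (hasDerivAt_pi.mp hg i)

theorem HasDerivAt.mulVec (M : Matrix κ ι ℝ) {f : ℝ → ι → ℝ} {f' : ι → ℝ} {t : ℝ}
    (hf : HasDerivAt f f' t) : HasDerivAt (fun s => M *ᵥ f s) (M *ᵥ f') t :=
  (Matrix.mulVecLin M).toContinuousLinearMap.hasFDerivAt.comp_hasDerivAt t hf

theorem dotProduct_sector_nonpos {φ : ℝ → ℝ} {α β : ℝ}
    (hφ : ∀ a d : ℝ, (φ a - φ d - α * (a - d)) * (φ a - φ d - β * (a - d)) ≤ 0) (a d : κ → ℝ) :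
    (φ ∘ a - φ ∘ d - α • (a - d)) ⬝ᵥ (φ ∘ a - φ ∘ d - β • (a - d)) ≤ 0 :=
  Finset.sum_nonpos fun j _ => hφ (a j) (d j)

theorem quadForm_deriv_add_le_of_lmi [DecidableEq κ] {P M : Matrix ι ι ℝ} {W : Matrix κ ι ℝ}
    {B : Matrix ι κ ℝ} {α β γ : ℝ} (hP : P.IsSymm)
    (hLMI : (-(fromBlocks (Mᵀ * P + P * M + γ • P - (2 * α * β) • (Wᵀ * W))
        (P * B + (α + β) • Wᵀ) ((P * B + (α + β) • Wᵀ)ᵀ)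
        (-(2 : ℝ) • (1 : Matrix κ κ ℝ)))).PosSemidef) (v : ι → ℝ) (w : κ → ℝ) :
    (M *ᵥ v + B *ᵥ w) ⬝ᵥ (P *ᵥ v) + v ⬝ᵥ (P *ᵥ (M *ᵥ v + B *ᵥ w)) + γ * (v ⬝ᵥ (P *ᵥ v))
      ≤ 2 * ((w - α • (W *ᵥ v)) ⬝ᵥ (w - β • (W *ᵥ v))) := by
  have hquad := hLMI.dotProduct_mulVec_nonneg (Sum.elim v w)
  rw [star_trivial, neg_mulVec, dotProduct_neg, fromBlocks_mulVec,
    sumElim_dotProduct_sumElim] at hquad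
  simp only [transpose_add, transpose_mul, transpose_smul, transpose_transpose, hP.eq,
    add_mulVec, sub_mulVec, smul_mulVec, ← mulVec_mulVec, one_mulVec, neg_smul, neg_mulVec,
    dotProduct_add, dotProduct_sub, dotProduct_smul, dotProduct_neg, smul_eq_mul,
    Sum.elim_comp_inl, Sum.elim_comp_inr, add_dotProduct, sub_dotProduct, smul_dotProduct,
    mulVec_add] at hquad ⊢
  simp only [dotProduct_transpose_mulVec] at hquad
  rw [dotProduct_comm (P *ᵥ v) (M *ᵥ v), dotProduct_comm (P *ᵥ v) (B *ᵥ w)] at hquad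
  rw [dotProduct_comm w (W *ᵥ v)] at hquad ⊢
  linarith

end

section
variable {ι : Type*} [DecidableEq ι] {P : Matrix ι ι ℝ} {p : ℝ}

theorem isSymm_of_posSemidef_sub_smul_one (h : (P - p • 1).PosSemidef) : P.IsSymm := by
  have hs : (P - p • 1).IsSymm :=
    (conjTranspose_eq_transpose_of_trivial _).symm.trans h.isHermitian
  simpa using hs.add (isSymm_one.smul p)

theorem mul_dotProduct_self_le_of_posSemidef_sub_smul_one [Fintype ι]
    (h : (P - p • 1).PosSemidef) (v : ι → ℝ) : p * (v ⬝ᵥ v) ≤ v ⬝ᵥ (P *ᵥ v) := by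
  simpa only [star_trivial, sub_mulVec, smul_mulVec, one_mulVec, dotProduct_sub,
    dotProduct_smul, smul_eq_mul, sub_nonneg] using h.dotProduct_mulVec_nonneg v

theorem dotProduct_mulVec_le_of_posSemidef_smul_one_sub [Fintype ι]
    (h : (p • 1 - P).PosSemidef) (v : ι → ℝ) : v ⬝ᵥ (P *ᵥ v) ≤ p * (v ⬝ᵥ v) := by
  simpa only [star_trivial, sub_mulVec, smul_mulVec, one_mulVec, dotProduct_sub,
    dotProduct_smul, smul_eq_mul, sub_nonneg] using h.dotProduct_mulVec_nonneg v

end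

theorem le_mul_exp_of_hasDerivAt_le_mul {f f' : ℝ → ℝ} {K : ℝ}
    (hf : ∀ s, 0 ≤ s → HasDerivAt f (f' s) s) (hbound : ∀ s, 0 ≤ s → f' s ≤ K * f s)
    {t : ℝ} (ht : 0 ≤ t) : f t ≤ f 0 * Real.exp (K * t) := by
  have := le_gronwallBound_of_liminf_deriv_right_le (δ := f 0) (ε := 0) (b := t)
    (fun s hs => (hf s hs.1).continuousAt.continuousWithinAt)
    (fun s hs _ hr => (hf s hs.1).hasDerivWithinAt.liminf_right_slope_le hr) le_rfl
    (fun s hs => by simpa using hbound s hs.1) t ⟨ht, le_rfl⟩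
  simpa [gronwallBound_ε0] using this

theorem sqrt_le_sqrt_div_mul_mul_sqrt {a b p q k : ℝ} (hp : 0 < p) (hk : 0 ≤ k) (hb : 0 ≤ b)
    (h : p * a ≤ q * (k ^ 2 * b)) : √a ≤ √(q / p) * k * √b := by
  have hkb : 0 ≤ k ^ 2 * b := by positivity
  calc √a ≤ √(q / p * (k ^ 2 * b)) := by
        gcongr
        rwa [div_mul_eq_mul_div, le_div_iff₀' hp]
    _ = √(q / p) * k * √b := by
        rw [Real.sqrt_mul' _ hkb, Real.sqrt_mul' _ hb, Real.sqrt_sq hk, mul_assoc]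

theorem controlled_hopfield_contractive_general
    (n l m : ℕ) (A : Matrix (Fin n) (Fin n) ℝ)
    (g : Matrix (Fin n) (Fin l) ℝ) (H : Matrix (Fin l) (Fin n) ℝ)
    (W1 : Matrix (Fin m) (Fin n) ℝ) (Wmin : Matrix (Fin n) (Fin m) ℝ)
    (b1 : Fin m → ℝ) (c : Fin n → ℝ)
    (φ : ℝ → ℝ) (α β : ℝ)
    (hsec : ∀ a d : ℝ, (φ a - φ d - α * (a - d)) * (φ a - φ d - β * (a - d)) ≤ 0)
    (P : Matrix (Fin n) (Fin n) ℝ)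
    (p₁ p₂ γ : ℝ) (hp₁ : 0 < p₁)
    (hPlo : (P - p₁ • (1 : Matrix (Fin n) (Fin n) ℝ)).PosSemidef)
    (hPhi : (p₂ • (1 : Matrix (Fin n) (Fin n) ℝ) - P).PosSemidef)
    (hLMI : (-(Matrix.fromBlocks
        ((A + g * H)ᵀ * P + P * (A + g * H) + γ • P - (2 * α * β) • (W1ᵀ * W1))
        (P * Wmin + (α + β) • W1ᵀ)
        ((P * Wmin + (α + β) • W1ᵀ)ᵀ)
        (-(2 : ℝ) • (1 : Matrix (Fin m) (Fin m) ℝ)))).PosSemidef)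
    (x₁ x₂ : ℝ → Fin n → ℝ)
    (hx₁ : ∀ t, 0 ≤ t → HasDerivAt x₁
      ((A + g * H).mulVec (x₁ t)
        + Wmin.mulVec (fun j => φ (W1.mulVec (x₁ t) j + b1 j)) + c) t)
    (hx₂ : ∀ t, 0 ≤ t → HasDerivAt x₂
      ((A + g * H).mulVec (x₂ t)
        + Wmin.mulVec (fun j => φ (W1.mulVec (x₂ t) j + b1 j)) + c) t) :
    ∀ t, 0 ≤ t →
      eNorm (x₁ t - x₂ t) ≤
        Real.sqrt (p₂ / p₁) * Real.exp (-(γ / 2) * t) * eNorm (x₁ 0 - x₂ 0) := by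
  intro t ht
  set e : ℝ → Fin n → ℝ := fun s => x₁ s - x₂ s
  set Δ : ℝ → Fin m → ℝ := fun s => φ ∘ (W1 *ᵥ x₁ s + b1) - φ ∘ (W1 *ᵥ x₂ s + b1)
  have he (s : ℝ) (hs : 0 ≤ s) : HasDerivAt e ((A + g * H) *ᵥ e s + Wmin *ᵥ Δ s) s :=
    ((hx₁ s hs).sub (hx₂ s hs)).congr_deriv <| by
      simp only [e, Δ, mulVec_sub]
      exact (add_sub_add_right_eq_sub _ _ _).trans (add_sub_add_comm _ _ _ _)
  have hV : e t ⬝ᵥ (P *ᵥ e t) ≤ e 0 ⬝ᵥ (P *ᵥ e 0) * Real.exp (-γ * t) :=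
    le_mul_exp_of_hasDerivAt_le_mul (fun s hs => (he s hs).dotProduct ((he s hs).mulVec P))
      (fun s _ => by
        have hsector := dotProduct_sector_nonpos hsec (W1 *ᵥ x₁ s + b1) (W1 *ᵥ x₂ s + b1)
        rw [add_sub_add_right_eq_sub, ← mulVec_sub] at hsector
        have hlmi := quadForm_deriv_add_le_of_lmi (isSymm_of_posSemidef_sub_smul_one hPlo) hLMI
          (e s) (Δ s)
        linarith) ht
  refine sqrt_le_sqrt_div_mul_mul_sqrt hp₁ (Real.exp_pos _).le
    (by simpa only [star_trivial] using dotProduct_self_star_nonneg (e 0)) ?_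
  calc p₁ * (e t ⬝ᵥ e t) ≤ e t ⬝ᵥ (P *ᵥ e t) :=
        mul_dotProduct_self_le_of_posSemidef_sub_smul_one hPlo (e t)
    _ ≤ e 0 ⬝ᵥ (P *ᵥ e 0) * Real.exp (-γ * t) := hV
    _ ≤ p₂ * (e 0 ⬝ᵥ e 0) * Real.exp (-γ * t) := by
        gcongr
        exact dotProduct_mulVec_le_of_posSemidef_smul_one_sub hPhi (e 0)
    _ = p₂ * (Real.exp (-(γ / 2) * t) ^ 2 * (e 0 ⬝ᵥ e 0)) := by
        rw [sq, ← Real.exp_add]; ring_nf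

/-- Lemma 2: contraction of the controlled Hopfield system
`ẋ = (A + gH) x + W_min Φ(W¹ x + b¹) + c` under the matrix inequality condition. -/
theorem controlled_hopfield_contractive
    (n l m : ℕ) (A : Matrix (Fin n) (Fin n) ℝ)
    (g : Matrix (Fin n) (Fin l) ℝ) (H : Matrix (Fin l) (Fin n) ℝ)
    (W1 : Matrix (Fin m) (Fin n) ℝ) (Wmin : Matrix (Fin n) (Fin m) ℝ)
    (b1 : Fin m → ℝ) (c : Fin n → ℝ)
    (φ : ℝ → ℝ) (α β : ℝ)
    (hsec : ∀ a d : ℝ, (φ a - φ d - α * (a - d)) * (φ a - φ d - β * (a - d)) ≤ 0)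
    (P : Matrix (Fin n) (Fin n) ℝ) (hP : P.PosDef)
    (p₁ p₂ γ : ℝ) (hp₁ : 0 < p₁) (hp₁₂ : p₁ ≤ p₂) (hγ : 0 < γ)
    (hPlo : (P - p₁ • (1 : Matrix (Fin n) (Fin n) ℝ)).PosSemidef)
    (hPhi : (p₂ • (1 : Matrix (Fin n) (Fin n) ℝ) - P).PosSemidef)
    (hLMI : (-(Matrix.fromBlocks
        ((A + g * H)ᵀ * P + P * (A + g * H) + γ • P - (2 * α * β) • (W1ᵀ * W1))
        (P * Wmin + (α + β) • W1ᵀ)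
        ((P * Wmin + (α + β) • W1ᵀ)ᵀ)
        (-(2 : ℝ) • (1 : Matrix (Fin m) (Fin m) ℝ)))).PosSemidef)
    (x₁ x₂ : ℝ → Fin n → ℝ)
    (hx₁ : ∀ t, 0 ≤ t → HasDerivAt x₁
      ((A + g * H).mulVec (x₁ t)
        + Wmin.mulVec (fun j => φ (W1.mulVec (x₁ t) j + b1 j)) + c) t)
    (hx₂ : ∀ t, 0 ≤ t → HasDerivAt x₂
      ((A + g * H).mulVec (x₂ t)
        + Wmin.mulVec (fun j => φ (W1.mulVec (x₂ t) j + b1 j)) + c) t) :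
    ∀ t, 0 ≤ t →
      eNorm (x₁ t - x₂ t) ≤
        Real.sqrt (p₂ / p₁) * Real.exp (-(γ / 2) * t) * eNorm (x₁ 0 - x₂ 0) :=
  controlled_hopfield_contractive_general n l m A g H W1 Wmin b1 c φ α β hsec P p₁ p₂ γ hp₁ hPlo
    hPhi hLMI x₁ x₂ hx₁ hx₂
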